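/- arXiv:2012.00268 — 2 statements merged into one kernel-verified Lean document; each statement's English description precedes it below -/
import Mathlib

section
/- Let m_B, m_E be positive integers, K_{B,1}, K_{B,2}, K_{E,1}, K_{E,2} > 0, ρ_{B,1}, ρ_{B,2}, ρ_{E,1}, ρ_{E,2} > 0 real, and p_B, p_E ∈ [0,1]. Let f_B^{ARS} be the ARS PDF with parameters (p_B, m_B, K_{B,1}, K_{B,2}, ρ_{B,1}, ρ_{B,2}) and F_E^{ARS} the ARS CDF with parameters (p_E, m_E, K_{E,1}, K_{E,2}, ρ_{E,1}, ρ_{E,2}). Then the probability of non-zero secrecy capacity P_nz = ∫₀^∞ F_E^{ARS}(γ)·f_B^{ARS}(γ) dγ satisfies P_nz = Σ_{i=1}^{2} Σ_{j=1}^{2} Q_{B,i}·Q_{E,j}·D_{i,j}, where Q_{ℓ,1} = p_ℓ, Q_{ℓ,2} = 1 − p_ℓ, and D_{i,j} = Σ_{l=0}^{m_E−1} Σ_{n=0}^{m_B−1} B_l(m_E,K_{E,j})·B_n(m_B,K_{B,i})·( 1 − Σ_{k=0}^{m_E−l−1} (k + m_B − n − 1)! / [ ρ_{B,i}^{m_B−n}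 · ρ_{E,j}^k · (m_B−n−1)! · k! ] · (1/ρ_{B,i} + 1/ρ_{E,j})^{−(k+m_B−n)} ). -/
open MeasureTheory Filter Finset Real

/-- Coefficients `B_n(m,K)` of the integer-parameter Rician shadowed model. -/
noncomputable def Bcoef (m : ℕ) (K : ℝ) (n : ℕ) : ℝ :=
  ((m - 1).choose n : ℝ) * ((m : ℝ) / (K + m)) ^ n * (K / (K + m)) ^ (m - 1 - n)

/-- Integer-parameter Rician shadowed PDF with parameters `(m, K, ρ)`. -/
noncomputable def rsPDF (m : ℕ) (K ρ : ℝ) (γ : ℝ) : ℝ :=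
  ∑ n ∈ Finset.range m,
    Bcoef m K n * γ ^ (m - n - 1) * Real.exp (-γ / ρ) /
      (ρ ^ (m - n) * ((m - n - 1).factorial : ℝ))

/-- Integer-parameter Rician shadowed CDF with parameters `(m, K, ρ)`. -/
noncomputable def rsCDF (m : ℕ) (K ρ : ℝ) (γ : ℝ) : ℝ :=
  ∑ j ∈ Finset.range m,
    Bcoef m K j *
      (1 - Real.exp (-γ / ρ) *
        ∑ k ∈ Finset.range (m - j), γ ^ k / (ρ ^ k * (k.factorial : ℝ)))

/-- Alternate Rician Shadowed (ARS) PDF with parameters `(p, m, K₁, K₂, ρ₁, ρ₂)`. -/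
noncomputable def arsPDF (p : ℝ) (m : ℕ) (K₁ K₂ ρ₁ ρ₂ : ℝ) (γ : ℝ) : ℝ :=
  p * rsPDF m K₁ ρ₁ γ + (1 - p) * rsPDF m K₂ ρ₂ γ

/-- Alternate Rician Shadowed (ARS) CDF with parameters `(p, m, K₁, K₂, ρ₁, ρ₂)`. -/
noncomputable def arsCDF (p : ℝ) (m : ℕ) (K₁ K₂ ρ₁ ρ₂ : ℝ) (γ : ℝ) : ℝ :=
  p * rsCDF m K₁ ρ₁ γ + (1 - p) * rsCDF m K₂ ρ₂ γ

/-!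
A Rician shadowed law with integer `m` is the mixture `∑ₙ Bₙ · Erlang(m - n, ρ)`, and its CDF is
the same mixture of Erlang CDFs `1 - e^{-γ/ρ} ∑_{k<N} (γ/ρ)^k / k!`. Multiplying out the mixtures
reduces `P_nz` to the integrals of `e^{-γ/ρ_E} γ^k` against an Erlang density of scale `ρ_B`;
the two exponentials merge into one of rate `1/ρ_B + 1/ρ_E`, so each is a Gamma integral
`∫ γ^p e^{-sγ} dγ = p! / s^{p+1}`.
-/

open Set

section GammaIntegral

variable {r : ℝ}

lemma integrableOn_pow_mul_exp_neg_mul (p : ℕ) (hr : 0 < r) :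
    IntegrableOn (fun t : ℝ => t ^ p * exp (-(r * t))) (Ioi 0) := by
  refine (integrableOn_rpow_mul_exp_neg_mul_rpow (s := p) (p := 1)
    (neg_one_lt_zero.trans_le p.cast_nonneg) one_pos hr).congr_fun (fun t _ => ?_) measurableSet_Ioi
  simp only [rpow_natCast, rpow_one, neg_mul]

lemma integral_pow_mul_exp_neg_mul (p : ℕ) (hr : 0 < r) :
    ∫ t in Ioi (0 : ℝ), t ^ p * exp (-(r * t)) = (p.factorial : ℝ) / r ^ (p + 1) := by
  have h := integral_rpow_mul_exp_neg_mul_Ioi (a := p + 1) (by positivity) hr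
  rw [add_sub_cancel_right, Gamma_nat_eq_factorial, ← Nat.cast_succ, rpow_natCast,
    one_div, inv_pow] at h
  rw [div_eq_inv_mul, ← Nat.succ_eq_add_one, ← h]
  exact setIntegral_congr_fun measurableSet_Ioi fun t _ => by simp only [rpow_natCast]

end GammaIntegral

/-- Density of the Erlang law of shape `a ≥ 1` and scale `ρ`. -/
noncomputable def erlangPDF (a : ℕ) (ρ γ : ℝ) : ℝ :=
  γ ^ (a - 1) * exp (-γ / ρ) / (ρ ^ a * ((a - 1).factorial : ℝ))

/-- Survival function `1 - F` of the Erlang law of shape `N` and scale `ρ`. -/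
noncomputable def erlangSF (N : ℕ) (ρ γ : ℝ) : ℝ :=
  exp (-γ / ρ) * ∑ k ∈ range N, γ ^ k / (ρ ^ k * (k.factorial : ℝ))

lemma rsPDF_eq_sum_erlangPDF (m : ℕ) (K ρ γ : ℝ) :
    rsPDF m K ρ γ = ∑ n ∈ range m, Bcoef m K n * erlangPDF (m - n) ρ γ := by
  simp only [rsPDF, erlangPDF, mul_assoc, mul_div_assoc]

lemma rsCDF_eq_sum_erlangSF (m : ℕ) (K ρ γ : ℝ) :
    rsCDF m K ρ γ = ∑ j ∈ range m, Bcoef m K j * (1 - erlangSF (m - j) ρ γ) :=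
  rfl

section Erlang

variable {ρ ρB ρE : ℝ}

lemma erlangPDF_eq_const_mul (a : ℕ) (ρ γ : ℝ) :
    erlangPDF a ρ γ = (ρ ^ a * ((a - 1).factorial : ℝ))⁻¹ * (γ ^ (a - 1) * exp (-(ρ⁻¹ * γ))) := by
  rw [erlangPDF, div_eq_inv_mul, neg_div, div_eq_inv_mul]

lemma integrableOn_erlangPDF (a : ℕ) (hρ : 0 < ρ) : IntegrableOn (erlangPDF a ρ) (Ioi 0) := by
  simp only [funext (erlangPDF_eq_const_mul a ρ)]
  exact (integrableOn_pow_mul_exp_neg_mul _ (inv_pos.2 hρ)).const_mul _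

lemma integral_erlangPDF {a : ℕ} (ha : 0 < a) (hρ : 0 < ρ) :
    ∫ γ in Ioi 0, erlangPDF a ρ γ = 1 := by
  simp only [erlangPDF_eq_const_mul, integral_const_mul,
    integral_pow_mul_exp_neg_mul _ (inv_pos.2 hρ), Nat.sub_add_cancel ha]
  have : ((a - 1).factorial : ℝ) ≠ 0 := by positivity
  field_simp
  rw [one_div, inv_pow, mul_inv_cancel₀ (by positivity)]

lemma erlangSF_mul_erlangPDF (N a : ℕ) (hρB : 0 < ρB) (hρE : 0 < ρE) (γ : ℝ) :
    erlangSF N ρE γ * erlangPDF a ρB γ =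
      ∑ k ∈ range N, (ρB ^ a * ρE ^ k * ((a - 1).factorial : ℝ) * (k.factorial : ℝ))⁻¹ *
        (γ ^ (k + (a - 1)) * exp (-((1 / ρB + 1 / ρE) * γ))) := by
  rw [erlangSF, erlangPDF, mul_sum, sum_mul]
  refine sum_congr rfl fun k _ => ?_
  have hexp : exp (-((1 / ρB + 1 / ρE) * γ)) = exp (-γ / ρE) * exp (-γ / ρB) := by
    rw [← exp_add]; ring_nf
  rw [hexp, pow_add]
  field_simp

lemma integrableOn_erlangSF_mul_erlangPDF (N a : ℕ) (hρB : 0 < ρB) (hρE : 0 < ρE) :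
    IntegrableOn (fun γ => erlangSF N ρE γ * erlangPDF a ρB γ) (Ioi 0) := by
  simp only [erlangSF_mul_erlangPDF N a hρB hρE]
  exact integrable_finsetSum _ fun k _ =>
    (integrableOn_pow_mul_exp_neg_mul _ (by positivity)).const_mul _

lemma integral_erlangSF_mul_erlangPDF (N : ℕ) {a : ℕ} (ha : 0 < a) (hρB : 0 < ρB)
    (hρE : 0 < ρE) :
    ∫ γ in Ioi 0, erlangSF N ρE γ * erlangPDF a ρB γ =
      ∑ k ∈ range N, ((k + a - 1).factorial : ℝ) /
          (ρB ^ a * ρE ^ k * ((a - 1).factorial : ℝ) * (k.factorial : ℝ)) *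
        (1 / ρB + 1 / ρE) ^ (-((k + a : ℕ) : ℤ)) := by
  simp only [erlangSF_mul_erlangPDF N a hρB hρE]
  rw [integral_finsetSum _ fun k _ =>
    (integrableOn_pow_mul_exp_neg_mul _ (by positivity)).const_mul _]
  refine sum_congr rfl fun k _ => ?_
  rw [integral_const_mul, integral_pow_mul_exp_neg_mul _ (by positivity), zpow_neg, zpow_natCast,
    show k + (a - 1) + 1 = k + a by omega, show k + (a - 1) = k + a - 1 by omega]
  ring

lemma integrableOn_one_sub_erlangSF_mul_erlangPDF (N a : ℕ) (hρB : 0 < ρB) (hρE : 0 < ρE) :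
    IntegrableOn (fun γ => (1 - erlangSF N ρE γ) * erlangPDF a ρB γ) (Ioi 0) := by
  simp only [sub_mul, one_mul]
  exact (integrableOn_erlangPDF a hρB).sub (integrableOn_erlangSF_mul_erlangPDF N a hρB hρE)

lemma integral_one_sub_erlangSF_mul_erlangPDF (N : ℕ) {a : ℕ} (ha : 0 < a) (hρB : 0 < ρB)
    (hρE : 0 < ρE) :
    ∫ γ in Ioi 0, (1 - erlangSF N ρE γ) * erlangPDF a ρB γ =
      1 - ∑ k ∈ range N, ((k + a - 1).factorial : ℝ) /
          (ρB ^ a * ρE ^ k * ((a - 1).factorial : ℝ) * (k.factorial : ℝ)) *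
        (1 / ρB + 1 / ρE) ^ (-((k + a : ℕ) : ℤ)) := by
  simp only [sub_mul, one_mul]
  rw [integral_sub (integrableOn_erlangPDF a hρB)
    (integrableOn_erlangSF_mul_erlangPDF N a hρB hρE), integral_erlangPDF ha hρB,
    integral_erlangSF_mul_erlangPDF N ha hρB hρE]

end Erlang

lemma rsCDF_mul_rsPDF (mB mE : ℕ) (KB KE ρB ρE γ : ℝ) :
    rsCDF mE KE ρE γ * rsPDF mB KB ρB γ =
      ∑ l ∈ range mE, ∑ n ∈ range mB, Bcoef mE KE l * Bcoef mB KB n *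
        ((1 - erlangSF (mE - l) ρE γ) * erlangPDF (mB - n) ρB γ) := by
  rw [rsCDF_eq_sum_erlangSF, rsPDF_eq_sum_erlangPDF, sum_mul_sum]
  exact sum_congr rfl fun _ _ => sum_congr rfl fun _ _ => by ring

section RicianShadowed

variable {ρB ρE : ℝ}

lemma integrableOn_rsCDF_mul_rsPDF (mB mE : ℕ) (KB KE : ℝ) (hρB : 0 < ρB) (hρE : 0 < ρE) :
    IntegrableOn (fun γ => rsCDF mE KE ρE γ * rsPDF mB KB ρB γ) (Ioi 0) := by
  simp only [rsCDF_mul_rsPDF]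
  exact integrable_finsetSum _ fun l _ => integrable_finsetSum _ fun n _ =>
    (integrableOn_one_sub_erlangSF_mul_erlangPDF _ _ hρB hρE).const_mul _

lemma integral_rsCDF_mul_rsPDF (mB mE : ℕ) (KB KE : ℝ) (hρB : 0 < ρB) (hρE : 0 < ρE) :
    ∫ γ in Ioi 0, rsCDF mE KE ρE γ * rsPDF mB KB ρB γ =
      ∑ l ∈ range mE, ∑ n ∈ range mB, Bcoef mE KE l * Bcoef mB KB n *
        (1 - ∑ k ∈ range (mE - l), ((k + mB - n - 1).factorial : ℝ) /
            (ρB ^ (mB - n) * ρE ^ k * ((mB - n - 1).factorial : ℝ) * (k.factorial : ℝ)) *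
          (1 / ρB + 1 / ρE) ^ (-((k + mB - n : ℕ) : ℤ))) := by
  have hint := fun (l n : ℕ) =>
    (integrableOn_one_sub_erlangSF_mul_erlangPDF (mE - l) (mB - n) hρB hρE).const_mul
      (Bcoef mE KE l * Bcoef mB KB n)
  simp only [rsCDF_mul_rsPDF]
  rw [integral_finsetSum _ fun l _ => integrable_finsetSum _ fun n _ => hint l n]
  refine sum_congr rfl fun l _ => ?_
  rw [integral_finsetSum _ fun n _ => hint l n]
  refine sum_congr rfl fun n hn => ?_
  have hn : n < mB := mem_range.1 hn
  simp only [integral_const_mul, Nat.add_sub_assoc hn.le,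
    integral_one_sub_erlangSF_mul_erlangPDF _ (Nat.sub_pos_of_lt hn) hρB hρE]

end RicianShadowed

lemma arsCDF_mul_arsPDF (pB pE : ℝ) (mB mE : ℕ) (KB1 KB2 KE1 KE2 ρB1 ρB2 ρE1 ρE2 γ : ℝ) :
    arsCDF pE mE KE1 KE2 ρE1 ρE2 γ * arsPDF pB mB KB1 KB2 ρB1 ρB2 γ =
      ∑ i : Fin 2, ∑ j : Fin 2, ![pB, 1 - pB] i * ![pE, 1 - pE] j *
        (rsCDF mE (![KE1, KE2] j) (![ρE1, ρE2] j) γ *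
          rsPDF mB (![KB1, KB2] i) (![ρB1, ρB2] i) γ) := by
  simp only [arsCDF, arsPDF, Fin.sum_univ_two, Matrix.cons_val_zero, Matrix.cons_val_one]
  ring

theorem pnz_closed_form_general (mB mE : ℕ)
    (KB1 KB2 KE1 KE2 : ℝ)
    (ρB1 ρB2 ρE1 ρE2 : ℝ) (hρB1 : 0 < ρB1) (hρB2 : 0 < ρB2)
    (hρE1 : 0 < ρE1) (hρE2 : 0 < ρE2)
    (pB pE : ℝ) :
    ∫ γ in Set.Ioi (0 : ℝ),
        arsCDF pE mE KE1 KE2 ρE1 ρE2 γ * arsPDF pB mB KB1 KB2 ρB1 ρB2 γ =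
      ∑ i : Fin 2, ∑ j : Fin 2,
        (![pB, 1 - pB] i) * (![pE, 1 - pE] j) *
          (∑ l ∈ Finset.range mE, ∑ n ∈ Finset.range mB,
            Bcoef mE (![KE1, KE2] j) l * Bcoef mB (![KB1, KB2] i) n *
              (1 - ∑ k ∈ Finset.range (mE - l),
                ((k + mB - n - 1).factorial : ℝ) /
                    ((![ρB1, ρB2] i) ^ (mB - n) * (![ρE1, ρE2] j) ^ k *
                      ((mB - n - 1).factorial : ℝ) * (k.factorial : ℝ)) *
                  (1 / ![ρB1, ρB2] i + 1 / ![ρE1, ρE2] j) ^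
                    (-((k + mB - n : ℕ) : ℤ)))) := by
  have hρB : ∀ i, 0 < ![ρB1, ρB2] i := Fin.forall_fin_two.2 ⟨hρB1, hρB2⟩
  have hρE : ∀ j, 0 < ![ρE1, ρE2] j := Fin.forall_fin_two.2 ⟨hρE1, hρE2⟩
  have hint := fun i j => (integrableOn_rsCDF_mul_rsPDF mB mE (![KB1, KB2] i) (![KE1, KE2] j)
    (hρB i) (hρE j)).const_mul (![pB, 1 - pB] i * ![pE, 1 - pE] j)
  simp only [arsCDF_mul_arsPDF]
  rw [integral_finsetSum _ fun i _ => integrable_finsetSum _ fun j _ => hint i j]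
  refine sum_congr rfl fun i _ => ?_
  rw [integral_finsetSum _ fun j _ => hint i j]
  refine sum_congr rfl fun j _ => ?_
  rw [integral_const_mul, integral_rsCDF_mul_rsPDF mB mE _ _ (hρB i) (hρE j)]

/-- Closed-form probability of non-zero secrecy capacity over ARS fading channels
(integer `m`): `P_nz = Σᵢ Σⱼ Q_{B,i} Q_{E,j} D_{i,j}`. -/
theorem pnz_closed_form (mB mE : ℕ) (hmB : 0 < mB) (hmE : 0 < mE)
    (KB1 KB2 KE1 KE2 : ℝ) (hKB1 : 0 < KB1) (hKB2 : 0 < KB2)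
    (hKE1 : 0 < KE1) (hKE2 : 0 < KE2)
    (ρB1 ρB2 ρE1 ρE2 : ℝ) (hρB1 : 0 < ρB1) (hρB2 : 0 < ρB2)
    (hρE1 : 0 < ρE1) (hρE2 : 0 < ρE2)
    (pB pE : ℝ) (hpB : pB ∈ Set.Icc (0 : ℝ) 1) (hpE : pE ∈ Set.Icc (0 : ℝ) 1) :
    ∫ γ in Set.Ioi (0 : ℝ),
        arsCDF pE mE KE1 KE2 ρE1 ρE2 γ * arsPDF pB mB KB1 KB2 ρB1 ρB2 γ =
      ∑ i : Fin 2, ∑ j : Fin 2,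
        (![pB, 1 - pB] i) * (![pE, 1 - pE] j) *
          (∑ l ∈ Finset.range mE, ∑ n ∈ Finset.range mB,
            Bcoef mE (![KE1, KE2] j) l * Bcoef mB (![KB1, KB2] i) n *
              (1 - ∑ k ∈ Finset.range (mE - l),
                ((k + mB - n - 1).factorial : ℝ) /
                    ((![ρB1, ρB2] i) ^ (mB - n) * (![ρE1, ρE2] j) ^ k *
                      ((mB - n - 1).factorial : ℝ) * (k.factorial : ℝ)) *
                  (1 / ![ρB1, ρB2] i + 1 / ![ρE1, ρE2] j) ^
                    (-((k + mB - n : ℕ) : ℤ)))) :=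
  pnz_closed_form_general mB mE KB1 KB2 KE1 KE2 ρB1 ρB2 ρE1 ρE2 hρB1 hρB2 hρE1 hρE2 pB pE
end

section
/- Let m_B, m_E be positive integers, K_{B,1}, K_{B,2}, K_{E,1}, K_{E,2} > 0, ρ_{E,1}, ρ_{E,2} > 0, c₁, c₂ > 0 real, p_B, p_E ∈ [0,1], and R_s ≥ 1 real. For s > 0, let F_B^{(s)} be the ARS CDF with parameters (p_B, m_B, K_{B,1}, K_{B,2}, c₁·s, c₂·s) and let f_E^{ARS} be the ARS PDF with parameters (p_E, m_E, K_{E,1}, K_{E,2}, ρ_{E,1}, ρ_{E,2}). Then the secrecy outage probability P_o(s) = ∫₀^∞ F_B^{(s)}(R_s·γ + R_s − 1)·f_E^{ARS}(γ) dγ is strictly positive for every s > 0, and the secrecy diversity order equals one: lim_{s→∞} [ − ln P_o(s) / ln s ] = 1. -/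
open MeasureTheory Filter Finset Real

/-!
Writing `t = γ / ρ`, the Rician shadowed CDF is the mixture `∑ⱼ B_j · E_{m-j}(t)` of unit-rate
Erlang distribution functions, with weights `B_j ≥ 0` summing to one (binomial theorem). Each
`E_M(t)` lies in `[0, min 1 t]`, and `E_1(t) = 1 - e^{-t} ≥ t e^{-t}` carries the positive weight
`B_{m-1}`. Hence, with `ρ` proportional to `s`, the main-channel CDF at `x` is at most `x / (c s)`
and, for `x` bounded and `s ≥ 1`, at least a constant times `x / s`. Integrating against the
eavesdropper density (which has a finite first moment) squeezes `P_o(s)` between `a / s` and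
`b / s` with `a > 0`, so `-log P_o(s) / log s → 1`.
-/

lemma Bcoef_nonneg {m : ℕ} {K : ℝ} (hK : 0 < K) (n : ℕ) : 0 ≤ Bcoef m K n := by
  unfold Bcoef; positivity

lemma Bcoef_last_pos {m : ℕ} {K : ℝ} (hm : 0 < m) (hK : 0 < K) : 0 < Bcoef m K (m - 1) := by
  simp only [Bcoef, Nat.choose_self, Nat.sub_self, pow_zero, Nat.cast_one, one_mul, mul_one]
  positivity

lemma sum_Bcoef {m : ℕ} {K : ℝ} (hm : 0 < m) (hK : 0 < K) :
    ∑ n ∈ range m, Bcoef m K n = 1 := by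
  have hsum : (m : ℝ) / (K + m) + K / (K + m) = 1 := by field_simp; ring
  have h := add_pow ((m : ℝ) / (K + m)) (K / (K + m)) (m - 1)
  rw [hsum, one_pow, Nat.sub_add_cancel hm] at h
  rw [h]
  exact sum_congr rfl fun n _ => by unfold Bcoef; ring

noncomputable def erlangCDF (M : ℕ) (t : ℝ) : ℝ :=
  1 - exp (-t) * ∑ k ∈ range M, t ^ k / k.factorial

lemma erlangCDF_nonneg (M : ℕ) {t : ℝ} (ht : 0 ≤ t) : 0 ≤ erlangCDF M t := by
  have h : exp (-t) * ∑ k ∈ range M, t ^ k / k.factorial ≤ exp (-t) * exp t :=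
    mul_le_mul_of_nonneg_left (sum_le_exp_of_nonneg ht M) (exp_nonneg _)
  rw [← exp_add, neg_add_cancel, exp_zero] at h
  exact sub_nonneg.2 h

lemma erlangCDF_le_one (M : ℕ) {t : ℝ} (ht : 0 ≤ t) : erlangCDF M t ≤ 1 := by
  unfold erlangCDF
  have : 0 ≤ exp (-t) * ∑ k ∈ range M, t ^ k / k.factorial := by positivity
  linarith

lemma erlangCDF_le {M : ℕ} (hM : 0 < M) {t : ℝ} (ht : 0 ≤ t) : erlangCDF M t ≤ t := by
  have hone : 1 ≤ ∑ k ∈ range M, t ^ k / k.factorial := by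
    simpa using single_le_sum (f := fun k => t ^ k / k.factorial) (fun k _ => by positivity)
      (mem_range.2 hM)
  have hexp : 1 - t ≤ exp (-t) := by linarith [add_one_le_exp (-t)]
  unfold erlangCDF
  nlinarith [exp_pos (-t)]

lemma mul_exp_neg_le_erlangCDF_one (t : ℝ) : t * exp (-t) ≤ erlangCDF 1 t := by
  have h : (t + 1) * exp (-t) ≤ 1 := by
    simpa [← exp_add] using mul_le_mul_of_nonneg_right (add_one_le_exp t) (exp_nonneg (-t))
  simp only [erlangCDF, range_one, sum_singleton, pow_zero, Nat.factorial_zero, Nat.cast_one,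
    div_one, mul_one]
  linarith

lemma rsCDF_eq_sum_erlangCDF (m : ℕ) (K ρ γ : ℝ) :
    rsCDF m K ρ γ = ∑ j ∈ range m, Bcoef m K j * erlangCDF (m - j) (γ / ρ) := by
  simp only [rsCDF, erlangCDF, div_pow, div_div, neg_div]

section RicianShadowed

variable {m : ℕ} {K ρ γ : ℝ}

lemma rsCDF_le_of_forall_erlangCDF_le (hm : 0 < m) (hK : 0 < K) {u : ℝ}
    (h : ∀ j < m, erlangCDF (m - j) (γ / ρ) ≤ u) : rsCDF m K ρ γ ≤ u := by
  rw [rsCDF_eq_sum_erlangCDF]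
  calc ∑ j ∈ range m, Bcoef m K j * erlangCDF (m - j) (γ / ρ)
      ≤ ∑ j ∈ range m, Bcoef m K j * u :=
        sum_le_sum fun j hj => mul_le_mul_of_nonneg_left (h j (mem_range.1 hj)) (Bcoef_nonneg hK j)
    _ = u := by rw [← sum_mul, sum_Bcoef hm hK, one_mul]

lemma rsCDF_le_one (hm : 0 < m) (hK : 0 < K) (hρ : 0 < ρ) (hγ : 0 ≤ γ) :
    rsCDF m K ρ γ ≤ 1 :=
  rsCDF_le_of_forall_erlangCDF_le hm hK fun _ _ => erlangCDF_le_one _ (by positivity)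

lemma rsCDF_le_div (hm : 0 < m) (hK : 0 < K) (hρ : 0 < ρ) (hγ : 0 ≤ γ) :
    rsCDF m K ρ γ ≤ γ / ρ :=
  rsCDF_le_of_forall_erlangCDF_le hm hK fun _ hj =>
    erlangCDF_le (Nat.sub_pos_of_lt hj) (by positivity)

lemma Bcoef_mul_erlangCDF_le_rsCDF (hm : 0 < m) (hK : 0 < K) (hρ : 0 < ρ) (hγ : 0 ≤ γ) :
    Bcoef m K (m - 1) * erlangCDF 1 (γ / ρ) ≤ rsCDF m K ρ γ := by
  have hlast : m - (m - 1) = 1 := by omega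
  rw [rsCDF_eq_sum_erlangCDF]
  simpa only [hlast] using single_le_sum (f := fun j => Bcoef m K j * erlangCDF (m - j) (γ / ρ))
    (fun j _ => mul_nonneg (Bcoef_nonneg hK j) (erlangCDF_nonneg _ (by positivity)))
    (mem_range.2 (Nat.sub_lt hm one_pos))

lemma le_rsCDF (hm : 0 < m) (hK : 0 < K) (hρ : 0 < ρ) (hγ : 0 ≤ γ) {u T : ℝ} (hu : ρ ≤ u)
    (hT : γ / ρ ≤ T) : Bcoef m K (m - 1) * exp (-T) / u * γ ≤ rsCDF m K ρ γ := by
  have hexp : exp (-T) ≤ exp (-(γ / ρ)) := exp_le_exp.2 (neg_le_neg hT)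
  have hdiv : γ / u ≤ γ / ρ := div_le_div_of_nonneg_left hγ hρ hu
  calc Bcoef m K (m - 1) * exp (-T) / u * γ = Bcoef m K (m - 1) * (γ / u * exp (-T)) := by ring
    _ ≤ Bcoef m K (m - 1) * (γ / ρ * exp (-(γ / ρ))) := by
        gcongr
        exact Bcoef_nonneg hK _
    _ ≤ Bcoef m K (m - 1) * erlangCDF 1 (γ / ρ) :=
        mul_le_mul_of_nonneg_left (mul_exp_neg_le_erlangCDF_one _) (Bcoef_nonneg hK _)
    _ ≤ rsCDF m K ρ γ := Bcoef_mul_erlangCDF_le_rsCDF hm hK hρ hγ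

lemma rsCDF_pos (hm : 0 < m) (hK : 0 < K) (hρ : 0 < ρ) (hγ : 0 < γ) : 0 < rsCDF m K ρ γ :=
  lt_of_lt_of_le (by have := Bcoef_last_pos hm hK; positivity)
    (le_rsCDF hm hK hρ hγ.le le_rfl le_rfl)

lemma rsPDF_pos (hm : 0 < m) (hK : 0 < K) (hρ : 0 < ρ) (hγ : 0 < γ) : 0 < rsPDF m K ρ γ := by
  have hlast : m - (m - 1) = 1 := by omega
  refine sum_pos' (fun n _ => by have := Bcoef_nonneg (m := m) hK n; positivity)
    ⟨m - 1, mem_range.2 (Nat.sub_lt hm one_pos), ?_⟩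
  simp only [hlast, Nat.sub_self, pow_zero, pow_one, Nat.factorial_zero, Nat.cast_one, mul_one]
  have := Bcoef_last_pos hm hK
  positivity

lemma integrableOn_pow_mul_exp_neg_div (n : ℕ) (hρ : 0 < ρ) :
    IntegrableOn (fun x : ℝ => x ^ n * exp (-x / ρ)) (Set.Ioi 0) := by
  refine (integrableOn_rpow_mul_exp_neg_mul_rpow (s := n) (p := 1) (b := 1 / ρ)
    (by linarith [n.cast_nonneg (α := ℝ)]) one_pos (by positivity)).congr_fun
    (fun x _ => ?_) measurableSet_Ioi
  simp only [rpow_one, rpow_natCast]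
  ring_nf

lemma integrableOn_pow_mul_rsPDF (k : ℕ) (hρ : 0 < ρ) :
    IntegrableOn (fun γ => γ ^ k * rsPDF m K ρ γ) (Set.Ioi 0) := by
  have h : (fun γ => γ ^ k * rsPDF m K ρ γ) = fun γ => ∑ n ∈ range m,
      Bcoef m K n / (ρ ^ (m - n) * (m - n - 1).factorial) *
        (γ ^ (k + (m - n - 1)) * exp (-γ / ρ)) := by
    funext γ
    rw [rsPDF, mul_sum]
    exact sum_congr rfl fun n _ => by rw [pow_add]; ring
  rw [h]
  exact integrable_finsetSum _ fun n _ => (integrableOn_pow_mul_exp_neg_div _ hρ).const_mul _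

lemma continuous_rsCDF : Continuous (rsCDF m K ρ) := by
  unfold rsCDF; fun_prop

end RicianShadowed

lemma mix_le {p a b t : ℝ} (hp : p ∈ Set.Icc (0 : ℝ) 1) (ha : a ≤ t) (hb : b ≤ t) :
    p * a + (1 - p) * b ≤ t :=
  convex_Iic t ha hb hp.1 (sub_nonneg.2 hp.2) (add_sub_cancel _ _)

lemma le_mix {p a b t : ℝ} (hp : p ∈ Set.Icc (0 : ℝ) 1) (ha : t ≤ a) (hb : t ≤ b) :
    t ≤ p * a + (1 - p) * b :=
  convex_Ici t ha hb hp.1 (sub_nonneg.2 hp.2) (add_sub_cancel _ _)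

lemma mix_pos {p a b : ℝ} (hp : p ∈ Set.Icc (0 : ℝ) 1) (ha : 0 < a) (hb : 0 < b) :
    0 < p * a + (1 - p) * b :=
  (lt_min ha hb).trans_le (le_mix hp (min_le_left a b) (min_le_right a b))

section AlternateRicianShadowed

variable {p : ℝ} {m : ℕ} {K₁ K₂ ρ₁ ρ₂ x : ℝ}

lemma arsPDF_pos (hp : p ∈ Set.Icc (0 : ℝ) 1) (hm : 0 < m) (hK₁ : 0 < K₁) (hK₂ : 0 < K₂)
    (hρ₁ : 0 < ρ₁) (hρ₂ : 0 < ρ₂) (hx : 0 < x) : 0 < arsPDF p m K₁ K₂ ρ₁ ρ₂ x :=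
  mix_pos hp (rsPDF_pos hm hK₁ hρ₁ hx) (rsPDF_pos hm hK₂ hρ₂ hx)

lemma integrableOn_pow_mul_arsPDF (k : ℕ) (hρ₁ : 0 < ρ₁) (hρ₂ : 0 < ρ₂) :
    IntegrableOn (fun γ => γ ^ k * arsPDF p m K₁ K₂ ρ₁ ρ₂ γ) (Set.Ioi 0) :=
  IntegrableOn.congr_fun
    (((integrableOn_pow_mul_rsPDF (m := m) (K := K₁) k hρ₁).const_mul p).add
      ((integrableOn_pow_mul_rsPDF (m := m) (K := K₂) k hρ₂).const_mul (1 - p)))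
    (fun γ _ => by simp only [arsPDF, Pi.add_apply]; ring) measurableSet_Ioi

lemma continuous_arsCDF : Continuous (arsCDF p m K₁ K₂ ρ₁ ρ₂) :=
  (continuous_const.mul continuous_rsCDF).add (continuous_const.mul continuous_rsCDF)

lemma arsCDF_pos (hp : p ∈ Set.Icc (0 : ℝ) 1) (hm : 0 < m) (hK₁ : 0 < K₁) (hK₂ : 0 < K₂)
    (hρ₁ : 0 < ρ₁) (hρ₂ : 0 < ρ₂) (hx : 0 < x) : 0 < arsCDF p m K₁ K₂ ρ₁ ρ₂ x :=
  mix_pos hp (rsCDF_pos hm hK₁ hρ₁ hx) (rsCDF_pos hm hK₂ hρ₂ hx)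

lemma arsCDF_le_one (hp : p ∈ Set.Icc (0 : ℝ) 1) (hm : 0 < m) (hK₁ : 0 < K₁) (hK₂ : 0 < K₂)
    (hρ₁ : 0 < ρ₁) (hρ₂ : 0 < ρ₂) (hx : 0 ≤ x) : arsCDF p m K₁ K₂ ρ₁ ρ₂ x ≤ 1 :=
  mix_le hp (rsCDF_le_one hm hK₁ hρ₁ hx) (rsCDF_le_one hm hK₂ hρ₂ hx)

lemma arsCDF_le_div (hp : p ∈ Set.Icc (0 : ℝ) 1) (hm : 0 < m) (hK₁ : 0 < K₁) (hK₂ : 0 < K₂)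
    {c : ℝ} (hc : 0 < c) (hc₁ : c ≤ ρ₁) (hc₂ : c ≤ ρ₂) (hx : 0 ≤ x) :
    arsCDF p m K₁ K₂ ρ₁ ρ₂ x ≤ x / c :=
  mix_le hp
    ((rsCDF_le_div hm hK₁ (hc.trans_le hc₁) hx).trans (div_le_div_of_nonneg_left hx hc hc₁))
    ((rsCDF_le_div hm hK₂ (hc.trans_le hc₂) hx).trans (div_le_div_of_nonneg_left hx hc hc₂))

lemma le_arsCDF (hp : p ∈ Set.Icc (0 : ℝ) 1) (hm : 0 < m) (hK₁ : 0 < K₁) (hK₂ : 0 < K₂)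
    (hρ₁ : 0 < ρ₁) (hρ₂ : 0 < ρ₂) (hx : 0 ≤ x) {u T : ℝ} (hu₁ : ρ₁ ≤ u) (hu₂ : ρ₂ ≤ u)
    (hT₁ : x / ρ₁ ≤ T) (hT₂ : x / ρ₂ ≤ T) :
    min (Bcoef m K₁ (m - 1)) (Bcoef m K₂ (m - 1)) * exp (-T) / u * x ≤
      arsCDF p m K₁ K₂ ρ₁ ρ₂ x := by
  have hu : 0 < u := hρ₁.trans_le hu₁
  refine le_mix hp ((?_ : _ ≤ _).trans (le_rsCDF hm hK₁ hρ₁ hx hu₁ hT₁))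
    ((?_ : _ ≤ _).trans (le_rsCDF hm hK₂ hρ₂ hx hu₂ hT₂)) <;> gcongr
  exacts [min_le_left _ _, min_le_right _ _]

end AlternateRicianShadowed

section Scaled

variable {p : ℝ} {m : ℕ} {K₁ K₂ c₁ c₂ s x : ℝ}

lemma arsCDF_mul_le (hp : p ∈ Set.Icc (0 : ℝ) 1) (hm : 0 < m) (hK₁ : 0 < K₁) (hK₂ : 0 < K₂)
    (hc₁ : 0 < c₁) (hc₂ : 0 < c₂) (hs : 0 < s) (hx : 0 ≤ x) :
    arsCDF p m K₁ K₂ (c₁ * s) (c₂ * s) x ≤ x / (min c₁ c₂ * s) :=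
  arsCDF_le_div hp hm hK₁ hK₂ (by positivity)
    (mul_le_mul_of_nonneg_right (min_le_left _ _) hs.le)
    (mul_le_mul_of_nonneg_right (min_le_right _ _) hs.le) hx

lemma le_arsCDF_mul (hp : p ∈ Set.Icc (0 : ℝ) 1) (hm : 0 < m) (hK₁ : 0 < K₁) (hK₂ : 0 < K₂)
    (hc₁ : 0 < c₁) (hc₂ : 0 < c₂) (hs : 1 ≤ s) (hx : 0 ≤ x) {X : ℝ} (hX : x ≤ X) :
    min (Bcoef m K₁ (m - 1)) (Bcoef m K₂ (m - 1)) * exp (-(X / min c₁ c₂)) / max c₁ c₂ / s * x ≤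
      arsCDF p m K₁ K₂ (c₁ * s) (c₂ * s) x := by
  have hc : 0 < min c₁ c₂ := lt_min hc₁ hc₂
  have hT {c : ℝ} (hmin : min c₁ c₂ ≤ c) : x / (c * s) ≤ X / min c₁ c₂ :=
    div_le_div₀ (hx.trans hX) hX hc (hmin.trans (le_mul_of_one_le_right (hc.le.trans hmin) hs))
  rw [div_div]
  exact le_arsCDF hp hm hK₁ hK₂ (by positivity) (by positivity) hx
    (mul_le_mul_of_nonneg_right (le_max_left _ _) (by positivity))
    (mul_le_mul_of_nonneg_right (le_max_right _ _) (by positivity))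
    (hT (min_le_left _ _)) (hT (min_le_right _ _))

end Scaled

lemma setIntegral_pos_of_forall_pos {α : Type*} [MeasurableSpace α] {μ : Measure α} {s : Set α}
    {f : α → ℝ} (hs : MeasurableSet s) (hμ : μ s ≠ 0) (hf : IntegrableOn f s μ)
    (hpos : ∀ x ∈ s, 0 < f x) : 0 < ∫ x in s, f x ∂μ := by
  rw [setIntegral_pos_iff_support_of_nonneg_ae ((ae_restrict_iff' hs).2
    (ae_of_all _ fun x hx => (hpos x hx).le)) hf]
  rwa [Set.inter_eq_right.2 fun x hx => Function.mem_support.2 (hpos x hx).ne', pos_iff_ne_zero]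

section OutageIntegral

variable {G f : ℝ → ℝ} {Rs : ℝ}

lemma le_mul_add_sub_one (hRs : 1 ≤ Rs) {γ : ℝ} (hγ : 0 ≤ γ) : γ ≤ Rs * γ + Rs - 1 := by
  nlinarith

lemma integrableOn_outage (hRs : 1 ≤ Rs) (hG : Continuous G) (hG0 : ∀ x > 0, 0 ≤ G x)
    (hG1 : ∀ x > 0, G x ≤ 1) (hf : IntegrableOn f (Set.Ioi 0)) :
    IntegrableOn (fun γ => G (Rs * γ + Rs - 1) * f γ) (Set.Ioi 0) := by
  refine hf.bdd_mul (c := 1) (hG.comp (by fun_prop)).aestronglyMeasurable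
    ((ae_restrict_iff' measurableSet_Ioi).2 (ae_of_all _ fun γ (hγ : 0 < γ) => ?_))
  have hx : 0 < Rs * γ + Rs - 1 := hγ.trans_le (le_mul_add_sub_one hRs hγ.le)
  rw [Real.norm_eq_abs, abs_of_nonneg (hG0 _ hx)]
  exact hG1 _ hx

lemma outage_le_div (hRs : 1 ≤ Rs) {C : ℝ} (hG : ∀ x > 0, G x ≤ x / C)
    (hf0 : ∀ γ > 0, 0 ≤ f γ) (hf : IntegrableOn f (Set.Ioi 0))
    (hf1 : IntegrableOn (fun γ => γ * f γ) (Set.Ioi 0))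
    (hi : IntegrableOn (fun γ => G (Rs * γ + Rs - 1) * f γ) (Set.Ioi 0)) :
    ∫ γ in Set.Ioi 0, G (Rs * γ + Rs - 1) * f γ ≤
      (∫ γ in Set.Ioi 0, (Rs * γ + Rs - 1) * f γ) / C := by
  have hmom : IntegrableOn (fun γ => (Rs * γ + Rs - 1) * f γ) (Set.Ioi 0) :=
    IntegrableOn.congr_fun ((hf1.const_mul Rs).add (hf.const_mul (Rs - 1)))
      (fun γ _ => by simp only [Pi.add_apply]; ring) measurableSet_Ioi
  rw [div_eq_mul_inv, ← integral_mul_const]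
  refine setIntegral_mono_on hi (hmom.mul_const _) measurableSet_Ioi fun γ (hγ : 0 < γ) => ?_
  have hx : 0 < Rs * γ + Rs - 1 := hγ.trans_le (le_mul_add_sub_one hRs hγ.le)
  calc G (Rs * γ + Rs - 1) * f γ ≤ (Rs * γ + Rs - 1) / C * f γ :=
        mul_le_mul_of_nonneg_right (hG _ hx) (hf0 γ hγ)
    _ = (Rs * γ + Rs - 1) * f γ * C⁻¹ := by ring

lemma mul_le_outage (hRs : 1 ≤ Rs) {a : ℝ} (ha : 0 ≤ a)
    (hG : ∀ x ∈ Set.Ioc 0 (2 * Rs - 1), a * x ≤ G x) (hG0 : ∀ x > 0, 0 ≤ G x)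
    (hf0 : ∀ γ > 0, 0 ≤ f γ) (hf1 : IntegrableOn (fun γ => γ * f γ) (Set.Ioi 0))
    (hi : IntegrableOn (fun γ => G (Rs * γ + Rs - 1) * f γ) (Set.Ioi 0)) :
    a * ∫ γ in Set.Ioo 0 1, γ * f γ ≤ ∫ γ in Set.Ioi 0, G (Rs * γ + Rs - 1) * f γ := by
  have hpos {γ : ℝ} (hγ : 0 < γ) : 0 < Rs * γ + Rs - 1 :=
    hγ.trans_le (le_mul_add_sub_one hRs hγ.le)
  rw [← integral_const_mul]
  calc ∫ γ in Set.Ioo 0 1, a * (γ * f γ)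
      ≤ ∫ γ in Set.Ioo 0 1, G (Rs * γ + Rs - 1) * f γ := by
        refine setIntegral_mono_on ((hf1.mono_set Set.Ioo_subset_Ioi_self).const_mul a)
          (hi.mono_set Set.Ioo_subset_Ioi_self) measurableSet_Ioo fun γ ⟨hγ0, hγ1⟩ => ?_
        rw [← mul_assoc]
        refine mul_le_mul_of_nonneg_right ?_ (hf0 γ hγ0)
        calc a * γ ≤ a * (Rs * γ + Rs - 1) :=
              mul_le_mul_of_nonneg_left (le_mul_add_sub_one hRs hγ0.le) ha
          _ ≤ G (Rs * γ + Rs - 1) := hG _ ⟨hpos hγ0, by nlinarith⟩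
    _ ≤ ∫ γ in Set.Ioi 0, G (Rs * γ + Rs - 1) * f γ :=
        setIntegral_mono_set hi ((ae_restrict_iff' measurableSet_Ioi).2 (ae_of_all _
          fun γ (hγ : 0 < γ) => mul_nonneg (hG0 _ (hpos hγ)) (hf0 γ hγ)))
          Set.Ioo_subset_Ioi_self.eventuallyLE

end OutageIntegral

lemma tendsto_neg_log_div_log_of_le_of_le {f : ℝ → ℝ} {a b : ℝ} (ha : 0 < a)
    (hlow : ∀ᶠ s in atTop, a / s ≤ f s) (hup : ∀ᶠ s in atTop, f s ≤ b / s) :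
    Tendsto (fun s => -log (f s) / log s) atTop (nhds 1) := by
  have hlim (c : ℝ) : Tendsto (fun s => 1 - log c / log s) atTop (nhds 1) := by
    simpa [div_eq_mul_inv] using
      tendsto_const_nhds.sub (tendsto_log_atTop.inv_tendsto_atTop.const_mul (log c))
  have hbounds : ∀ᶠ s in atTop, 0 < log s ∧
      log s - log b ≤ -log (f s) ∧ -log (f s) ≤ log s - log a := by
    filter_upwards [hlow, hup, eventually_gt_atTop 1] with s hl hu hs
    have hs0 : 0 < s := one_pos.trans hs
    have hf : 0 < f s := (div_pos ha hs0).trans_le hl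
    have hb : 0 < b := ha.trans_le ((div_le_div_iff_of_pos_right hs0).1 (hl.trans hu))
    have hlo := log_le_log (div_pos ha hs0) hl
    have hhi := log_le_log hf hu
    rw [log_div ha.ne' hs0.ne'] at hlo
    rw [log_div hb.ne' hs0.ne'] at hhi
    exact ⟨log_pos hs, by linarith, by linarith⟩
  refine tendsto_of_tendsto_of_tendsto_of_le_of_le' (hlim b) (hlim a) ?_ ?_ <;>
    filter_upwards [hbounds] with s ⟨hlogs, hb, ha⟩ <;>
    rw [one_sub_div hlogs.ne']
  exacts [div_le_div_of_nonneg_right hb hlogs.le, div_le_div_of_nonneg_right ha hlogs.le]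

/-- The secrecy outage probability is strictly positive and the secrecy diversity
order equals one: `lim_{s→∞} (− ln P_o(s) / ln s) = 1`. -/
theorem sop_secrecy_diversity_order (mB mE : ℕ) (hmB : 0 < mB) (hmE : 0 < mE)
    (KB1 KB2 KE1 KE2 : ℝ) (hKB1 : 0 < KB1) (hKB2 : 0 < KB2)
    (hKE1 : 0 < KE1) (hKE2 : 0 < KE2)
    (ρE1 ρE2 c1 c2 : ℝ) (hρE1 : 0 < ρE1) (hρE2 : 0 < ρE2)
    (hc1 : 0 < c1) (hc2 : 0 < c2)
    (pB pE : ℝ) (hpB : pB ∈ Set.Icc (0 : ℝ) 1) (hpE : pE ∈ Set.Icc (0 : ℝ) 1)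
    (Rs : ℝ) (hRs : 1 ≤ Rs) :
    let Po : ℝ → ℝ := fun s =>
      ∫ γ in Set.Ioi (0 : ℝ),
        arsCDF pB mB KB1 KB2 (c1 * s) (c2 * s) (Rs * γ + Rs - 1) *
          arsPDF pE mE KE1 KE2 ρE1 ρE2 γ
    (∀ s : ℝ, 0 < s → 0 < Po s) ∧
      Filter.Tendsto (fun s : ℝ => -Real.log (Po s) / Real.log s)
        Filter.atTop (nhds 1) := by
  intro Po
  set fE := arsPDF pE mE KE1 KE2 ρE1 ρE2
  have hfE_pos : ∀ γ > 0, 0 < fE γ := fun γ => arsPDF_pos hpE hmE hKE1 hKE2 hρE1 hρE2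
  have hfE0 : ∀ γ > 0, 0 ≤ fE γ := fun γ hγ => (hfE_pos γ hγ).le
  have hfE : IntegrableOn fE (Set.Ioi 0) := by
    simpa using integrableOn_pow_mul_arsPDF (p := pE) (m := mE) (K₁ := KE1) (K₂ := KE2) 0 hρE1 hρE2
  have hfE1 : IntegrableOn (fun γ => γ * fE γ) (Set.Ioi 0) := by
    simpa using integrableOn_pow_mul_arsPDF (p := pE) (m := mE) (K₁ := KE1) (K₂ := KE2) 1 hρE1 hρE2
  have hFB_pos {s : ℝ} (hs : 0 < s) : ∀ x > 0, 0 < arsCDF pB mB KB1 KB2 (c1 * s) (c2 * s) x :=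
    fun x => arsCDF_pos hpB hmB hKB1 hKB2 (by positivity) (by positivity)
  have hint {s : ℝ} (hs : 0 < s) :=
    integrableOn_outage hRs continuous_arsCDF (fun x hx => (hFB_pos hs x hx).le)
      (fun x hx => arsCDF_le_one hpB hmB hKB1 hKB2 (by positivity) (by positivity) hx.le) hfE
  refine ⟨fun s hs => setIntegral_pos_of_forall_pos measurableSet_Ioi (by simp) (hint hs)
    fun γ hγ => mul_pos (hFB_pos hs _ (hγ.trans_le (le_mul_add_sub_one hRs hγ.le)))
      (hfE_pos γ hγ), ?_⟩
  set A := min (Bcoef mB KB1 (mB - 1)) (Bcoef mB KB2 (mB - 1)) *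
    exp (-((2 * Rs - 1) / min c1 c2)) / max c1 c2
  have hA : 0 < A := by
    have := Bcoef_last_pos hmB hKB1
    have := Bcoef_last_pos hmB hKB2
    have := hc1.trans_le (le_max_left c1 c2)
    positivity
  have hI : 0 < ∫ γ in Set.Ioo 0 1, γ * fE γ :=
    setIntegral_pos_of_forall_pos measurableSet_Ioo (by simp)
      (hfE1.mono_set Set.Ioo_subset_Ioi_self) fun γ hγ => mul_pos hγ.1 (hfE_pos γ hγ.1)
  refine tendsto_neg_log_div_log_of_le_of_le (mul_pos hA hI)
    (b := (∫ γ in Set.Ioi 0, (Rs * γ + Rs - 1) * fE γ) / min c1 c2) ?_ ?_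
  · filter_upwards [eventually_ge_atTop 1] with s hs
    rw [mul_div_right_comm]
    exact mul_le_outage hRs (by positivity)
      (fun x hx => le_arsCDF_mul hpB hmB hKB1 hKB2 hc1 hc2 hs hx.1.le hx.2)
      (fun x hx => (hFB_pos (one_pos.trans_le hs) x hx).le) hfE0 hfE1 (hint (one_pos.trans_le hs))
  · filter_upwards [eventually_gt_atTop 0] with s hs
    rw [div_div]
    exact outage_le_div hRs (fun x hx => arsCDF_mul_le hpB hmB hKB1 hKB2 hc1 hc2 hs hx.le)
      hfE0 hfE hfE1 (hint hs)
end
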